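/- Let α, β > -1 with α, β ≤ -1/p + 1/2 where p ∈ E(α,β), and let g(θ) = sign(θ)|sin(θ/2)|^{α+3/2}(cos(θ/2))^{β+3/2}. Then on (0,π) the composition D_{α+1,β+1}D*_{α,β} applied to g⁺(θ) = (sin(θ/2))^{α+3/2}(cos(θ/2))^{β+3/2} satisfies the lower bound D_{α+1,β+1}D*_{α,β}g⁺(θ) ≳ θ^{α-1/2}(π-θ)^{β-1/2} for θ ∈ (0,π), and consequently D_{α+1,β+1}D*_{α,β}g⁺ ∉ L^p(0,π). -/

import Mathlib

/-! Write `s = sin (θ/2)` and `c = cos (θ/2)`. Both Jacobi derivatives send a monomial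
`s^m c^n` to a combination of `s^(m-1) c^(n+1)` and `s^(m+1) c^(n-1)`, so composing them on
`g⁺ = s^(α+3/2) c^(β+3/2)` and using `s² + c² = 1` gives
`D_{α+1,β+1} D*_{α,β} g⁺ = ((α+1) c² + (β+1) s²) / 2 · s^(α-1/2) c^(β-1/2)`.
The exponents are nonpositive and `s ≤ θ`, `c ≤ π - θ`, whence the lower bound. Near `0` it
dominates a multiple of `θ^(α-1/2)`, whose `p`-th power is not integrable since
`(α-1/2) p ≤ -1`. -/

open MeasureTheory Set Real
open scoped ENNReal NNReal

/-- The upper endpoint `p(α,β)` of the interval `E(α,β)`. -/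
noncomputable def pMaxJ (α β : ℝ) : ℝ≥0∞ :=
  if -(1 / 2 : ℝ) ≤ α ∧ -(1 / 2 : ℝ) ≤ β then ⊤
  else ENNReal.ofReal (-1 / min (α + 1 / 2) (β + 1 / 2))

/-- The lower endpoint `p'(α,β)` (conjugate exponent of `p(α,β)`). -/
noncomputable def pMinJ (α β : ℝ) : ℝ :=
  if -(1 / 2 : ℝ) ≤ α ∧ -(1 / 2 : ℝ) ≤ β then 1
  else (pMaxJ α β).toReal / ((pMaxJ α β).toReal - 1)

/-- `p ∈ E(α,β) = (p'(α,β), p(α,β))`. -/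
def memEJ (α β p : ℝ) : Prop := pMinJ α β < p ∧ ENNReal.ofReal p < pMaxJ α β

/-- The Jacobi derivative `D_{a,b}h(θ) = h'(θ) - ((2a+1)/4)cot(θ/2)h(θ) + ((2b+1)/4)tan(θ/2)h(θ)`. -/
noncomputable def jacobiD (a b : ℝ) (h : ℝ → ℝ) (θ : ℝ) : ℝ :=
  deriv h θ - (2 * a + 1) / 4 * (Real.cos (θ / 2) / Real.sin (θ / 2)) * h θ
    + (2 * b + 1) / 4 * Real.tan (θ / 2) * h θ

/-- The adjoint Jacobi derivative
`D*_{a,b}h(θ) = -h'(θ) - ((2a+1)/4)cot(θ/2)h(θ) + ((2b+1)/4)tan(θ/2)h(θ)`. -/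
noncomputable def jacobiDStar (a b : ℝ) (h : ℝ → ℝ) (θ : ℝ) : ℝ :=
  -deriv h θ - (2 * a + 1) / 4 * (Real.cos (θ / 2) / Real.sin (θ / 2)) * h θ
    + (2 * b + 1) / 4 * Real.tan (θ / 2) * h θ

open Filter Topology

noncomputable def sinCosPow (m n θ : ℝ) : ℝ := sin (θ / 2) ^ m * cos (θ / 2) ^ n

lemma jacobiD_congr {a b θ : ℝ} {f g : ℝ → ℝ} (h : f =ᶠ[𝓝 θ] g) :
    jacobiD a b f θ = jacobiD a b g θ := by
  rw [jacobiD, jacobiD, h.deriv_eq, h.eq_of_nhds]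

lemma jacobiD_const_mul_add_const_mul {a b θ : ℝ} {f g : ℝ → ℝ} (A B : ℝ)
    (hf : DifferentiableAt ℝ f θ) (hg : DifferentiableAt ℝ g θ) :
    jacobiD a b (fun t => A * f t + B * g t) θ = A * jacobiD a b f θ + B * jacobiD a b g θ := by
  simp only [jacobiD]
  rw [deriv_fun_add (hf.const_mul A) (hg.const_mul B), deriv_const_mul _ hf, deriv_const_mul _ hg]
  ring

section HalfAngle

variable {θ : ℝ} (hθ : θ ∈ Ioo 0 π)
include hθ

lemma sin_half_pos_of_mem_Ioo : 0 < sin (θ / 2) :=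
  sin_pos_of_pos_of_lt_pi (by linarith [hθ.1]) (by linarith [hθ.2, pi_pos])

lemma cos_half_pos_of_mem_Ioo : 0 < cos (θ / 2) :=
  cos_pos_of_mem_Ioo ⟨by linarith [hθ.1, pi_pos], by linarith [hθ.2]⟩

lemma sinCosPow_nonneg (m n : ℝ) : 0 ≤ sinCosPow m n θ :=
  mul_nonneg (rpow_nonneg (sin_half_pos_of_mem_Ioo hθ).le _)
    (rpow_nonneg (cos_half_pos_of_mem_Ioo hθ).le _)

lemma sinCosPow_add_two (m n : ℝ) :
    sinCosPow m (n + 2) θ + sinCosPow (m + 2) n θ = sinCosPow m n θ := by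
  simp only [sinCosPow]
  rw [rpow_add (sin_half_pos_of_mem_Ioo hθ), rpow_add (cos_half_pos_of_mem_Ioo hθ), rpow_two,
    rpow_two]
  linear_combination sin (θ / 2) ^ m * cos (θ / 2) ^ n * sin_sq_add_cos_sq (θ / 2)

lemma cot_mul_sinCosPow (m n : ℝ) :
    cos (θ / 2) / sin (θ / 2) * sinCosPow m n θ = sinCosPow (m - 1) (n + 1) θ := by
  have hs := (sin_half_pos_of_mem_Ioo hθ).ne'
  simp only [sinCosPow]
  rw [rpow_sub_one hs, rpow_add_one (cos_half_pos_of_mem_Ioo hθ).ne']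
  field_simp

lemma tan_mul_sinCosPow (m n : ℝ) :
    tan (θ / 2) * sinCosPow m n θ = sinCosPow (m + 1) (n - 1) θ := by
  have hc := (cos_half_pos_of_mem_Ioo hθ).ne'
  simp only [sinCosPow]
  rw [tan_eq_sin_div_cos, rpow_add_one (sin_half_pos_of_mem_Ioo hθ).ne', rpow_sub_one hc]
  field_simp

lemma hasDerivAt_sinCosPow (m n : ℝ) :
    HasDerivAt (sinCosPow m n)
      (m / 2 * sinCosPow (m - 1) (n + 1) θ - n / 2 * sinCosPow (m + 1) (n - 1) θ) θ := by
  have hs := (sin_half_pos_of_mem_Ioo hθ).ne'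
  have hc := (cos_half_pos_of_mem_Ioo hθ).ne'
  have hhalf : HasDerivAt (fun t : ℝ => t / 2) (1 / 2) θ := (hasDerivAt_id θ).div_const 2
  refine ((hhalf.sin.rpow_const (Or.inl hs)).mul (hhalf.cos.rpow_const (Or.inl hc))).congr_deriv ?_
  simp only [sinCosPow]
  rw [rpow_add_one hs, rpow_add_one hc]
  ring

lemma jacobiD_sinCosPow (a b m n : ℝ) :
    jacobiD a b (sinCosPow m n) θ = (m / 2 - (2 * a + 1) / 4) * sinCosPow (m - 1) (n + 1) θ
      + ((2 * b + 1) / 4 - n / 2) * sinCosPow (m + 1) (n - 1) θ := by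
  simp only [jacobiD, (hasDerivAt_sinCosPow hθ m n).deriv, mul_assoc, cot_mul_sinCosPow hθ,
    tan_mul_sinCosPow hθ]
  ring

lemma jacobiDStar_sinCosPow (a b m n : ℝ) :
    jacobiDStar a b (sinCosPow m n) θ = (-m / 2 - (2 * a + 1) / 4) * sinCosPow (m - 1) (n + 1) θ
      + ((2 * b + 1) / 4 + n / 2) * sinCosPow (m + 1) (n - 1) θ := by
  simp only [jacobiDStar, (hasDerivAt_sinCosPow hθ m n).deriv, mul_assoc, cot_mul_sinCosPow hθ,
    tan_mul_sinCosPow hθ]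
  ring

lemma jacobiDStar_sinCosPow_three_halves (α β : ℝ) :
    jacobiDStar α β (sinCosPow (α + 3 / 2) (β + 3 / 2)) θ
      = -(α + 1) * sinCosPow (α + 1 / 2) (β + 5 / 2) θ
        + (β + 1) * sinCosPow (α + 5 / 2) (β + 1 / 2) θ := by
  rw [jacobiDStar_sinCosPow hθ]
  ring_nf

lemma jacobiD_jacobiDStar_sinCosPow_three_halves (α β : ℝ) :
    jacobiD (α + 1) (β + 1) (jacobiDStar α β (sinCosPow (α + 3 / 2) (β + 3 / 2))) θ
      = (α + 1) / 2 * sinCosPow (α - 1 / 2) (β + 3 / 2) θ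
        + (β + 1) / 2 * sinCosPow (α + 3 / 2) (β - 1 / 2) θ := by
  have hloc : jacobiDStar α β (sinCosPow (α + 3 / 2) (β + 3 / 2)) =ᶠ[𝓝 θ]
      fun t => -(α + 1) * sinCosPow (α + 1 / 2) (β + 5 / 2) t
        + (β + 1) * sinCosPow (α + 5 / 2) (β + 1 / 2) t := by
    filter_upwards [Ioo_mem_nhds hθ.1 hθ.2] with t ht
    exact jacobiDStar_sinCosPow_three_halves ht α β
  rw [jacobiD_congr hloc, jacobiD_const_mul_add_const_mul _ _
      (hasDerivAt_sinCosPow hθ _ _).differentiableAt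
      (hasDerivAt_sinCosPow hθ _ _).differentiableAt,
    jacobiD_sinCosPow hθ, jacobiD_sinCosPow hθ,
    ← sinCosPow_add_two hθ (α - 1 / 2) (β + 3 / 2),
    ← sinCosPow_add_two hθ (α + 3 / 2) (β - 1 / 2)]
  ring_nf

lemma rpow_mul_rpow_le_sinCosPow {a b : ℝ} (ha : a ≤ 0) (hb : b ≤ 0) :
    θ ^ a * (π - θ) ^ b ≤ sinCosPow a b θ := by
  have hsin : sin (θ / 2) ≤ θ := (sin_le (by linarith [hθ.1])).trans (by linarith [hθ.1])
  have hcos : cos (θ / 2) ≤ π - θ := by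
    rw [← sin_pi_div_two_sub, show π / 2 - θ / 2 = (π - θ) / 2 by ring]
    exact (sin_le (by linarith [hθ.2])).trans (by linarith [hθ.2])
  exact mul_le_mul (rpow_le_rpow_of_nonpos (sin_half_pos_of_mem_Ioo hθ) hsin ha)
    (rpow_le_rpow_of_nonpos (cos_half_pos_of_mem_Ioo hθ) hcos hb)
    (rpow_nonneg (by linarith [hθ.2]) _) (rpow_nonneg (sin_half_pos_of_mem_Ioo hθ).le _)

lemma rpow_mul_rpow_le_jacobiD_jacobiDStar {α β : ℝ} (hα : -1 ≤ α) (hβ : -1 ≤ β)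
    (hα' : α ≤ 1 / 2) (hβ' : β ≤ 1 / 2) :
    min (α + 1) (β + 1) / 2 * (θ ^ (α - 1 / 2) * (π - θ) ^ (β - 1 / 2))
    ≤ jacobiD (α + 1) (β + 1) (jacobiDStar α β (sinCosPow (α + 3 / 2) (β + 3 / 2))) θ := by
  have hmin : 0 ≤ min (α + 1) (β + 1) / 2 := by
    have := le_min (neg_le_iff_add_nonneg.1 hα) (neg_le_iff_add_nonneg.1 hβ)
    linarith
  have hS₁ := sinCosPow_nonneg hθ (α - 1 / 2) (β + 3 / 2)
  have hS₂ := sinCosPow_nonneg hθ (α + 3 / 2) (β - 1 / 2)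
  rw [jacobiD_jacobiDStar_sinCosPow_three_halves hθ]
  calc min (α + 1) (β + 1) / 2 * (θ ^ (α - 1 / 2) * (π - θ) ^ (β - 1 / 2))
      ≤ min (α + 1) (β + 1) / 2 * sinCosPow (α - 1 / 2) (β - 1 / 2) θ :=
        mul_le_mul_of_nonneg_left (rpow_mul_rpow_le_sinCosPow hθ (by linarith) (by linarith)) hmin
    _ = min (α + 1) (β + 1) / 2 * sinCosPow (α - 1 / 2) (β + 3 / 2) θ
          + min (α + 1) (β + 1) / 2 * sinCosPow (α + 3 / 2) (β - 1 / 2) θ := by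
        rw [← mul_add, ← sinCosPow_add_two hθ]
        ring_nf
    _ ≤ (α + 1) / 2 * sinCosPow (α - 1 / 2) (β + 3 / 2) θ
          + (β + 1) / 2 * sinCosPow (α + 3 / 2) (β - 1 / 2) θ := by
        gcongr
        exacts [min_le_left _ _, min_le_right _ _]

end HalfAngle

lemma not_memLp_of_mul_rpow_le {F : ℝ → ℝ} {a b c p : ℝ} (hb : 0 < b) (hc : 0 < c)
    (hp : 0 < p) (hap : a * p ≤ -1) (hF : ∀ x ∈ Ioo 0 b, c * x ^ a ≤ F x) :
    ¬ MemLp F (ENNReal.ofReal p) (volume.restrict (Ioo 0 b)) := by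
  intro hFp
  have hpow : MemLp (fun x : ℝ => x ^ a) (ENNReal.ofReal p) (volume.restrict (Ioo 0 b)) := by
    refine hFp.of_le_mul (c := c⁻¹) (by fun_prop) ?_
    rw [ae_restrict_iff' measurableSet_Ioo]
    refine Eventually.of_forall fun x hx => ?_
    rw [norm_of_nonneg (rpow_nonneg hx.1.le a), norm_eq_abs, le_inv_mul_iff₀ hc]
    exact (hF x hx).trans (le_abs_self _)
  have hint : IntegrableOn (fun x : ℝ => ‖x ^ a‖ ^ p) (Ioo 0 b) := by
    have := hpow.integrable_norm_rpow (ENNReal.ofReal_pos.2 hp).ne' ENNReal.ofReal_ne_top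
    rwa [ENNReal.toReal_ofReal hp.le] at this
  have : IntegrableOn (fun x : ℝ => x ^ (a * p)) (Ioo 0 b) := by
    refine hint.congr_fun (fun x hx => ?_) measurableSet_Ioo
    dsimp only
    rw [norm_of_nonneg (rpow_nonneg hx.1.le a), ← rpow_mul hx.1.le]
  linarith [(intervalIntegral.integrableOn_Ioo_rpow_iff hb).1 this]

lemma one_lt_of_memEJ {α β p : ℝ} (hα : -1 < α) (hβ : -1 < β) (hp : memEJ α β p) :
    1 < p := by
  obtain ⟨hmin, -⟩ := hp
  unfold pMinJ pMaxJ at hmin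
  split_ifs at hmin with hhalf
  · exact hmin
  · set m := min (α + 1 / 2) (β + 1 / 2)
    have hm_neg : m < 0 := by
      rw [not_and_or] at hhalf
      rcases hhalf with h | h
      · exact (min_le_left _ _).trans_lt (by linarith)
      · exact (min_le_right _ _).trans_lt (by linarith)
    have hm_gt : -(1 / 2) < m := lt_min (by linarith) (by linarith)
    have hq : 2 < -1 / m := by rw [lt_div_iff_of_neg hm_neg]; linarith
    rw [ENNReal.toReal_ofReal (by linarith)] at hmin
    have : 1 < -1 / m / (-1 / m - 1) := by rw [lt_div_iff₀ (by linarith)]; linarith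
    linarith

/-- Let `α, β > -1` with `α, β ≤ -1/p + 1/2` and `p ∈ E(α,β)`, and let
`g⁺(θ) = (sin(θ/2))^{α+3/2}(cos(θ/2))^{β+3/2}` on `(0,π)`.  Then
`D_{α+1,β+1}D*_{α,β}g⁺(θ) ≳ θ^{α-1/2}(π-θ)^{β-1/2}` on `(0,π)`, and consequently
`D_{α+1,β+1}D*_{α,β}g⁺ ∉ L^p(0,π)`. -/
theorem stmt19 (α β p : ℝ) (hα : -1 < α) (hβ : -1 < β)
    (hαp : α ≤ -1 / p + 1 / 2) (hβp : β ≤ -1 / p + 1 / 2) (hp : memEJ α β p)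
    (g : ℝ → ℝ)
    (hg : g = fun θ => Real.sin (θ / 2) ^ (α + 3 / 2) * Real.cos (θ / 2) ^ (β + 3 / 2)) :
    (∃ c : ℝ, 0 < c ∧ ∀ θ ∈ Ioo (0 : ℝ) π,
      c * (θ ^ (α - 1 / 2) * (π - θ) ^ (β - 1 / 2))
        ≤ jacobiD (α + 1) (β + 1) (jacobiDStar α β g) θ)
    ∧ ¬ MemLp (jacobiD (α + 1) (β + 1) (jacobiDStar α β g))
        (ENNReal.ofReal p) (volume.restrict (Ioo (0 : ℝ) π)) := by
  obtain rfl : g = sinCosPow (α + 3 / 2) (β + 3 / 2) := hg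
  have hp0 : 0 < p := one_pos.trans (one_lt_of_memEJ hα hβ hp)
  have hp_inv : -1 / p < 0 := div_neg_of_neg_of_pos (by norm_num) hp0
  have hβ' : β - 1 / 2 ≤ 0 := by linarith
  have hexp : (α - 1 / 2) * p ≤ -1 := by rw [← le_div_iff₀ hp0]; linarith
  obtain ⟨c, hc, hlow⟩ : ∃ c : ℝ, 0 < c ∧ ∀ θ ∈ Ioo (0 : ℝ) π,
      c * (θ ^ (α - 1 / 2) * (π - θ) ^ (β - 1 / 2))
      ≤ jacobiD (α + 1) (β + 1) (jacobiDStar α β (sinCosPow (α + 3 / 2) (β + 3 / 2))) θ :=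
    ⟨_, half_pos (lt_min (neg_lt_iff_pos_add.1 hα) (neg_lt_iff_pos_add.1 hβ)), fun θ hθ =>
      rpow_mul_rpow_le_jacobiD_jacobiDStar hθ hα.le hβ.le (by linarith) (by linarith)⟩
  refine ⟨⟨c, hc, hlow⟩, not_memLp_of_mul_rpow_le pi_pos
    (mul_pos hc (rpow_pos_of_pos pi_pos (β - 1 / 2))) hp0 hexp fun θ hθ => ?_⟩
  calc c * π ^ (β - 1 / 2) * θ ^ (α - 1 / 2)
      = c * (θ ^ (α - 1 / 2) * π ^ (β - 1 / 2)) := by ring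
    _ ≤ c * (θ ^ (α - 1 / 2) * (π - θ) ^ (β - 1 / 2)) :=
      mul_le_mul_of_nonneg_left (mul_le_mul_of_nonneg_left
        (rpow_le_rpow_of_nonpos (by linarith [hθ.2]) (by linarith [hθ.1]) hβ')
        (rpow_nonneg hθ.1.le _)) hc.le
    _ ≤ _ := hlow θ hθ
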